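/- arXiv:1906.01226 — 3 statements merged into one kernel-verified Lean document; each statement's English description precedes it below -/
import Mathlib

section
/- Let all parameters r, K, λ, m, μ, a, θ, d be positive with θ > d. Define I* = ad/(θ − d), S* = K − (1 + λK/r)I*, P* = (a + I*)(λS* − μ)/m. If R₀ = λK/μ > 1 and θ > d + λad(r + λK)/(r(λK − μ)), then S* > 0, I* > 0 and P* > 0. -/
/-- Positivity of the coexistence equilibrium components under `R₀ > 1` and
`θ > θ₁`. -/
theorem interior_equilibrium_positive
    (r K lam m μ a θ d : ℝ)
    (hr : 0 < r) (hK : 0 < K) (hlam : 0 < lam) (hm : 0 < m) (hμ : 0 < μ)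
    (ha : 0 < a) (hθ : 0 < θ) (hd : 0 < d) (hθd : d < θ)
    (hR0 : 1 < lam * K / μ)
    (hθ1 : d + lam * a * d * (r + lam * K) / (r * (lam * K - μ)) < θ) :
    0 < K - (1 + lam * K / r) * (a * d / (θ - d)) ∧
    0 < a * d / (θ - d) ∧
    0 < (a + a * d / (θ - d)) *
        (lam * (K - (1 + lam * K / r) * (a * d / (θ - d))) - μ) / m := by
  have ht : 0 < θ - d := sub_pos.mpr hθd
  have hKμ : μ < lam * K := by
    have := (one_lt_div hμ).mp hR0
    linarith
  have hI : 0 < a * d / (θ - d) := div_pos (mul_pos ha hd) ht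
  have hX : lam * a * d * (r + lam * K) < (θ - d) * (r * (lam * K - μ)) := by
    have h1 : lam * a * d * (r + lam * K) / (r * (lam * K - μ)) < θ - d := by linarith
    exact (div_lt_iff₀ (mul_pos hr (sub_pos.mpr hKμ))).mp h1
  have key : 0 < lam * (K - (1 + lam * K / r) * (a * d / (θ - d))) - μ := by
    have heq : lam * (K - (1 + lam * K / r) * (a * d / (θ - d))) - μ =
        ((θ - d) * (r * (lam * K - μ)) - lam * a * d * (r + lam * K)) / (r * (θ - d)) := by
      field_simp
      ring
    rw [heq]
    exact div_pos (by linarith) (mul_pos hr ht)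
  have hS : 0 < K - (1 + lam * K / r) * (a * d / (θ - d)) := by
    have : 0 < lam * (K - (1 + lam * K / r) * (a * d / (θ - d))) := by linarith
    nlinarith
  exact ⟨hS, hI, div_pos (mul_pos (by linarith) key) hm⟩
end

section
/- If η > 0 satisfies η < min(μ, d), then for all S, I, P ≥ 0: rS(1 − (S+I)/K) − μI − (md/θ)P + η(S + I + (m/θ)P) ≤ K(r+η)²/(4r). -/
/-- The key dissipativity inequality `ᶜDᵅV + ηV ≤ l` with
`l = K(r+η)²/(4r)` when `η < min(μ, d)`. -/
theorem dissipativity_inequality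
    (r K μ d m θ η : ℝ)
    (hr : 0 < r) (hK : 0 < K) (hμ : 0 < μ) (hd : 0 < d) (hm : 0 < m) (hθ : 0 < θ)
    (hη : 0 < η) (hηmin : η < min μ d) :
    ∀ S I P : ℝ, 0 ≤ S → 0 ≤ I → 0 ≤ P →
      r * S * (1 - (S + I) / K) - μ * I - (m * d / θ) * P +
          η * (S + I + (m / θ) * P) ≤
        K * (r + η)^2 / (4 * r) := by
  intro S I P hS hI hP
  have hμη : η < μ := lt_of_lt_of_le hηmin (min_le_left _ _)
  have hdη : η < d := lt_of_lt_of_le hηmin (min_le_right _ _)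
  have expand : r * S * (1 - (S + I) / K) - μ * I - (m * d / θ) * P +
      η * (S + I + (m / θ) * P) =
      ((r + η) * S - r * S ^ 2 / K) - r * S * I / K + (η - μ) * I +
        (m / θ) * ((η - d) * P) := by
    field_simp
    ring
  rw [expand]
  have key : (r + η) * S - r * S ^ 2 / K ≤ K * (r + η) ^ 2 / (4 * r) := by
    rw [le_div_iff₀ (by positivity : (0:ℝ) < 4 * r), sub_mul, div_mul_eq_mul_div,
      sub_le_iff_le_add, ← sub_le_iff_le_add', le_div_iff₀ hK]
    nlinarith [sq_nonneg (2 * r * S - K * (r + η)), hK.le, mul_pos hr hK]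
  have h2 : (η - μ) * I ≤ 0 :=
    mul_nonpos_of_nonpos_of_nonneg (by linarith) hI
  have h3 : (m / θ) * ((η - d) * P) ≤ 0 :=
    mul_nonpos_of_nonneg_of_nonpos (by positivity)
      (mul_nonpos_of_nonpos_of_nonneg (by linarith) hP)
  have h4 : 0 ≤ r * S * I / K := by positivity
  linarith
end

section
/- Suppose (S*, I*, P*) is a positive equilibrium with λS* − μ = mP*/(a+I*), and suppose θ < θ₂ := mdK/(2K(λS* − μ) − r) with 2K(λS*−μ) > r, and I* = ad/(θ−d) with θ > d. Then mP*/(a+I*) − mI*/(2(a+I*)) − r/(2K) < 0. -/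
/-- If `θ < θ₂`, the coefficient of `(I − I*)²` in the Lyapunov estimate for
the coexistence equilibrium is negative. -/
theorem coefficient_I_neg
    (r K lam m μ a θ d : ℝ)
    (hr : 0 < r) (hK : 0 < K) (hlam : 0 < lam) (hm : 0 < m) (hμ : 0 < μ)
    (ha : 0 < a) (hθ : 0 < θ) (hd : 0 < d) (hθd : d < θ)
    (Sstar Istar Pstar : ℝ)
    (hSpos : 0 < Sstar) (hIpos : 0 < Istar) (hPpos : 0 < Pstar)
    (heq : lam * Sstar - μ = m * Pstar / (a + Istar))
    (hI : Istar = a * d / (θ - d))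
    (hden : r < 2 * K * (lam * Sstar - μ))
    (hθ2 : θ < m * d * K / (2 * K * (lam * Sstar - μ) - r)) :
    m * Pstar / (a + Istar) - m * Istar / (2 * (a + Istar)) - r / (2 * K) < 0 := by
  have haI : 0 < a + Istar := by linarith
  have hθd' : 0 < θ - d := by linarith
  have hkey : m * Istar / (a + Istar) = m * d / θ := by
    rw [hI]; field_simp; ring
  have hc : m * Pstar / (a + Istar) = lam * Sstar - μ := heq.symm
  have h2 : θ * (2 * K * (lam * Sstar - μ) - r) < m * d * K :=
    (lt_div_iff₀ (by linarith : (0:ℝ) < 2 * K * (lam * Sstar - μ) - r)).mp hθ2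
  rw [hc]
  have : m * Istar / (2 * (a + Istar)) = m * d / (2 * θ) := by
    rw [hI]; field_simp; ring
  rw [this]
  rw [sub_sub, sub_neg]
  rw [div_add_div _ _ (by linarith : (2:ℝ)*θ ≠ 0) (by linarith : (2:ℝ)*K ≠ 0)]
  rw [lt_div_iff₀ (by positivity)]
  nlinarith
end
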